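/- arXiv:1703.03216 — 4 statements merged into one kernel-verified Lean document; each statement's English description precedes it below -/
import Mathlib

section
/- (Proposition 1.) Fix x_1, …, x_{n_p} ∈ ℝ^d and y_1, …, y_{n_q} ∈ ℝ^d, a convex function R : ℝ^d → ℝ, a constant λ ≥ 0, and ν = m/n_p for an integer 1 ≤ m ≤ n_p. Consider the convex program: minimize P(δ, ε, t) := (1/n_p) Σ_{i=1}^{n_p} ε_i − ν·t + λ R(δ) over all (δ, ε, t) ∈ ℝ^d × ℝ^{n_p} × ℝ satisfying ε_i ≥ 0 for all i, t ≥ 0, and ẑ_δ(x_i) ≥ t − ε_i for all i. Suppose the minimum is attained and every optimal solution (δ, ε, t) has t > 0. Then δ̂ ∈ ℝ^d is the δ-component of some optimal solution of this program if and only if δ̂ maximizes the function J(δ) := (min_{w ∈ W(n_p, ν)} Σ_{i=1}^{n_p} w_i ẑ_δ(x_i)) − λ R(δ) over ℝ^d. -/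
open Finset

/-- The capped simplex `W(n, ν) = {w : 0 ≤ wᵢ ≤ 1/n, ∑ wᵢ = ν}`. -/
def cappedSimplex (n : ℕ) (ν : ℝ) : Set (Fin n → ℝ) :=
  {w | (∀ i, 0 ≤ w i ∧ w i ≤ 1 / n) ∧ ∑ i, w i = ν}

/-- The log density-ratio model `ẑ_δ(v) = ⟨δ, v⟩ - log ((1/n_q) ∑ⱼ exp ⟨δ, yⱼ⟩)`. -/
noncomputable def zhat {d nq : ℕ} (y : Fin nq → Fin d → ℝ) (δ v : Fin d → ℝ) : ℝ :=
  (∑ a, δ a * v a) - Real.log ((1 / (nq : ℝ)) * ∑ j, Real.exp (∑ a, δ a * y j a))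

/-- the `m`-th smallest value of `z`, as a min over size-`m` subsets of the max. -/
noncomputable def thetaZ (n m : ℕ) (z : Fin n → ℝ) : ℝ :=
  if h : ((univ : Finset (Fin n)).powersetCard m).Nonempty then
    (univ.powersetCard m).inf' h (fun T => if h2 : T.Nonempty then T.sup' h2 z else 0)
  else 0

lemma theta_sandwich (n m : ℕ) (hm1 : 1 ≤ m) (hmn : m ≤ n) (z : Fin n → ℝ) :
    ∃ T : Finset (Fin n), T.card = m ∧ (∀ i ∈ T, z i ≤ thetaZ n m z) ∧
      ∀ i ∉ T, thetaZ n m z ≤ z i := by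
  obtain ⟨T₁, hT₁sub, hT₁card⟩ :=
    Finset.exists_subset_card_eq (s := (univ : Finset (Fin n))) (n := m) (by simpa using hmn)
  have hne : ((univ : Finset (Fin n)).powersetCard m).Nonempty :=
    ⟨T₁, Finset.mem_powersetCard.mpr ⟨hT₁sub, hT₁card⟩⟩
  have hθ : thetaZ n m z = (univ.powersetCard m).inf' hne
      (fun T => if h2 : T.Nonempty then T.sup' h2 z else 0) := by
    rw [thetaZ, dif_pos hne]
  obtain ⟨T₀, hT₀mem, hT₀eq⟩ := Finset.exists_mem_eq_inf' hne
    (fun T => if h2 : T.Nonempty then T.sup' h2 z else 0)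
  have hT₀card : T₀.card = m := (Finset.mem_powersetCard.mp hT₀mem).2
  have hT₀ne : T₀.Nonempty := Finset.card_pos.mp (by rw [hT₀card]; exact hm1)
  have hθsup : thetaZ n m z = T₀.sup' hT₀ne z := by
    rw [hθ, hT₀eq, dif_pos hT₀ne]
  set θ := thetaZ n m z with hθdef
  set A : Finset (Fin n) := univ.filter (fun i => z i ≤ θ) with hA
  have hTA : T₀ ⊆ A := by
    intro i hi
    rw [hA, Finset.mem_filter]
    exact ⟨Finset.mem_univ i, by rw [hθsup]; exact Finset.le_sup' z hi⟩
  have hAcard : m ≤ A.card := hT₀card ▸ Finset.card_le_card hTA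
  set B : Finset (Fin n) := univ.filter (fun i => z i < θ) with hB
  have hBA : B ⊆ A := by
    intro i hi
    rw [hB, Finset.mem_filter] at hi
    rw [hA, Finset.mem_filter]
    exact ⟨hi.1, le_of_lt hi.2⟩
  have hBcard : B.card < m := by
    by_contra hcon
    push_neg at hcon
    obtain ⟨T', hT'B, hT'card⟩ := Finset.exists_subset_card_eq hcon
    have hT'mem : T' ∈ (univ : Finset (Fin n)).powersetCard m :=
      Finset.mem_powersetCard.mpr ⟨Finset.subset_univ _, hT'card⟩
    have hT'ne : T'.Nonempty := Finset.card_pos.mp (by rw [hT'card]; exact hm1)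
    have h1 : θ ≤ T'.sup' hT'ne z := by
      have := Finset.inf'_le (fun T => if h2 : T.Nonempty then T.sup' h2 z else 0) hT'mem
      rw [← hθ] at this
      rwa [dif_pos hT'ne] at this
    have h2 : T'.sup' hT'ne z < θ := by
      rw [Finset.sup'_lt_iff]
      intro i hi
      have := hT'B hi
      rw [hB, Finset.mem_filter] at this
      exact this.2
    linarith
  obtain ⟨u, hBu, huA, hucard⟩ := Finset.exists_subsuperset_card_eq (n := m - B.card + B.card) hBA
    (by omega) (by rw [Nat.sub_add_cancel (le_of_lt hBcard)]; exact hAcard)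
  refine ⟨u, by rw [hucard, Nat.sub_add_cancel (le_of_lt hBcard)], ?_, ?_⟩
  · intro i hi
    have := huA hi
    rw [hA, Finset.mem_filter] at this
    exact this.2
  · intro i hi
    by_contra hcon
    push_neg at hcon
    exact hi (hBu (by rw [hB, Finset.mem_filter]; exact ⟨Finset.mem_univ i, hcon⟩))

lemma sum_ite_mem_mul {n : ℕ} (T : Finset (Fin n)) (c : ℝ) (z : Fin n → ℝ) :
    ∑ i, (if i ∈ T then c else 0) * z i = c * ∑ i ∈ T, z i := by
  rw [Finset.mul_sum]
  rw [show (∑ i, (if i ∈ T then c else 0) * z i) = ∑ i, (if i ∈ T then c * z i else 0) by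
    apply Finset.sum_congr rfl; intro i _; split <;> simp]
  rw [Finset.sum_ite_mem, Finset.univ_inter]

lemma key_eq (n m : ℕ) {z : Fin n → ℝ} {θ : ℝ} {T : Finset (Fin n)}
    (hT : T.card = m) (h1 : ∀ i ∈ T, z i ≤ θ) (h2 : ∀ i ∉ T, θ ≤ z i) :
    ((m : ℝ) / n) * θ - (1 / (n : ℝ)) * ∑ i, max 0 (θ - z i) = (1 / (n : ℝ)) * ∑ i ∈ T, z i := by
  have hsum : ∑ i, max 0 (θ - z i) = ∑ i ∈ T, (θ - z i) := by
    rw [show (∑ i, max 0 (θ - z i)) = ∑ i, (if i ∈ T then θ - z i else 0) by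
      apply Finset.sum_congr rfl; intro i _
      by_cases hi : i ∈ T
      · rw [if_pos hi]; exact max_eq_right (by linarith [h1 i hi])
      · rw [if_neg hi]; exact max_eq_left (by linarith [h2 i hi])]
    rw [Finset.sum_ite_mem, Finset.univ_inter]
  rw [hsum, Finset.sum_sub_distrib, Finset.sum_const, hT, nsmul_eq_mul]
  ring

lemma lb (n m : ℕ) {z : Fin n → ℝ} {θ : ℝ} {T : Finset (Fin n)}
    (hT : T.card = m) (h1 : ∀ i ∈ T, z i ≤ θ) (h2 : ∀ i ∉ T, θ ≤ z i)
    {w : Fin n → ℝ} (hw : w ∈ cappedSimplex n ((m : ℝ) / n)) :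
    (1 / (n : ℝ)) * ∑ i ∈ T, z i ≤ ∑ i, w i * z i := by
  obtain ⟨hwb, hws⟩ := hw
  have hχsum : ∑ i, (if i ∈ T then (1 / (n : ℝ)) else 0) = (m : ℝ) / n := by
    rw [Finset.sum_ite_mem, Finset.univ_inter, Finset.sum_const, hT, nsmul_eq_mul, mul_one_div]
  have key : ∀ i, (w i - (if i ∈ T then (1 / (n : ℝ)) else 0)) * θ ≤
      (w i - (if i ∈ T then (1 / (n : ℝ)) else 0)) * z i := by
    intro i
    by_cases hi : i ∈ T
    · rw [if_pos hi]
      exact mul_le_mul_of_nonpos_left (h1 i hi) (by linarith [(hwb i).2])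
    · rw [if_neg hi, sub_zero]
      exact mul_le_mul_of_nonneg_left (h2 i hi) (hwb i).1
  have hsum := Finset.sum_le_sum (s := univ) (fun i _ => key i)
  have e1 : ∑ i, (w i - (if i ∈ T then (1 / (n : ℝ)) else 0)) * θ = 0 := by
    rw [← Finset.sum_mul, Finset.sum_sub_distrib, hws, hχsum, sub_self, zero_mul]
  have e2 : ∑ i, (w i - (if i ∈ T then (1 / (n : ℝ)) else 0)) * z i =
      ∑ i, w i * z i - (1 / (n : ℝ)) * ∑ i ∈ T, z i := by
    rw [show (∑ i, (w i - (if i ∈ T then (1 / (n : ℝ)) else 0)) * z i) =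
        ∑ i, (w i * z i - (if i ∈ T then (1 / (n : ℝ)) else 0) * z i) by
      apply Finset.sum_congr rfl; intro i _; ring]
    rw [Finset.sum_sub_distrib, sum_ite_mem_mul]
  rw [e1, e2] at hsum
  linarith

lemma all_t (n m : ℕ) {z : Fin n → ℝ} {T : Finset (Fin n)}
    (hT : T.card = m) (t : ℝ) :
    ((m : ℝ) / n) * t - (1 / (n : ℝ)) * ∑ i, max 0 (t - z i) ≤ (1 / (n : ℝ)) * ∑ i ∈ T, z i := by
  have h3 : ∀ i, t - max 0 (t - z i) ≤ z i := by
    intro i; have := le_max_right 0 (t - z i); linarith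
  have s1 : ∑ i ∈ T, (t - max 0 (t - z i)) ≤ ∑ i ∈ T, z i :=
    Finset.sum_le_sum (fun i _ => h3 i)
  have s2 : ∑ i ∈ T, max 0 (t - z i) ≤ ∑ i, max 0 (t - z i) :=
    Finset.sum_le_sum_of_subset_of_nonneg (Finset.subset_univ T)
      (fun i _ _ => le_max_left 0 _)
  have s3 : ∑ i ∈ T, (t - max 0 (t - z i)) = (m : ℝ) * t - ∑ i ∈ T, max 0 (t - z i) := by
    rw [Finset.sum_sub_distrib, Finset.sum_const, hT, nsmul_eq_mul]
  have main : (m : ℝ) * t - ∑ i, max 0 (t - z i) ≤ ∑ i ∈ T, z i := by linarith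
  calc ((m : ℝ) / n) * t - (1 / (n : ℝ)) * ∑ i, max 0 (t - z i)
      = (1 / (n : ℝ)) * ((m : ℝ) * t - ∑ i, max 0 (t - z i)) := by ring
    _ ≤ (1 / (n : ℝ)) * ∑ i ∈ T, z i := by
        apply mul_le_mul_of_nonneg_left main (by positivity)

lemma tdre_zero_min (n m : ℕ) {z : Fin n → ℝ} {θ : ℝ} {T : Finset (Fin n)}
    (hT : T.card = m) (h1 : ∀ i ∈ T, z i ≤ θ) (hθ : θ ≤ 0) {t : ℝ} (ht : 0 ≤ t) :
    ∑ i, max 0 (0 - z i) + (m : ℝ) * t ≤ ∑ i, max 0 (t - z i) := by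
  have key : ∀ i, max 0 (0 - z i) + (if i ∈ T then t else 0) ≤ max 0 (t - z i) := by
    intro i
    by_cases hi : i ∈ T
    · have hz : z i ≤ 0 := le_trans (h1 i hi) hθ
      rw [if_pos hi, max_eq_right (by linarith), max_eq_right (by linarith)]
      linarith
    · rw [if_neg hi, add_zero]
      exact max_le_max le_rfl (by linarith)
  have hsum := Finset.sum_le_sum (fun i (_ : i ∈ univ) => key i)
  rw [Finset.sum_add_distrib] at hsum
  have hite : ∑ i, (if i ∈ T then t else 0) = (m : ℝ) * t := by
    rw [Finset.sum_ite_mem, Finset.univ_inter, Finset.sum_const, hT, nsmul_eq_mul]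
  linarith

lemma indicator_mem_capped (n m : ℕ) (hn : 0 < n) {T : Finset (Fin n)} (hT : T.card = m) :
    (fun i => if i ∈ T then (1 / (n : ℝ)) else 0) ∈ cappedSimplex n ((m : ℝ) / n) := by
  constructor
  · intro i
    by_cases hi : i ∈ T
    · simp only [if_pos hi]
      exact ⟨by positivity, le_rfl⟩
    · simp only [if_neg hi]
      exact ⟨le_rfl, by positivity⟩
  · rw [Finset.sum_ite_mem, Finset.univ_inter, Finset.sum_const, hT, nsmul_eq_mul, mul_one_div]

lemma sInf_eval (n m : ℕ) (hm1 : 1 ≤ m) (hmn : m ≤ n) (z : Fin n → ℝ) :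
    sInf ((fun w => ∑ i, w i * z i) '' cappedSimplex n ((m : ℝ) / n)) =
      ((m : ℝ) / n) * thetaZ n m z - (1 / (n : ℝ)) * ∑ i, max 0 (thetaZ n m z - z i) := by
  obtain ⟨T, hT, h1, h2⟩ := theta_sandwich n m hm1 hmn z
  have hn : 0 < n := lt_of_lt_of_le hm1 hmn
  rw [key_eq n m hT h1 h2]
  apply IsLeast.csInf_eq
  constructor
  · exact ⟨fun i => if i ∈ T then (1 / (n : ℝ)) else 0,
      indicator_mem_capped n m hn hT, sum_ite_mem_mul T _ z⟩
  · rintro r ⟨w, hw, rfl⟩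
    exact lb n m hT h1 h2 hw

lemma lin_comb {d : ℕ} (δ₁ δ₂ u : Fin d → ℝ) (a b : ℝ) :
    ∑ c, (a • δ₁ + b • δ₂) c * u c = a * ∑ c, δ₁ c * u c + b * ∑ c, δ₂ c * u c := by
  rw [Finset.mul_sum, Finset.mul_sum, ← Finset.sum_add_distrib]
  apply Finset.sum_congr rfl
  intro c _
  simp only [Pi.add_apply, Pi.smul_apply, smul_eq_mul]
  ring

lemma logN_convex {d nq : ℕ} (y : Fin nq → Fin d → ℝ) (δ₁ δ₂ : Fin d → ℝ)
    {a b : ℝ} (ha : 0 ≤ a) (hb : 0 ≤ b) (hab : a + b = 1) :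
    Real.log ((1 / (nq : ℝ)) * ∑ j, Real.exp (∑ c, (a • δ₁ + b • δ₂) c * y j c)) ≤
      a * Real.log ((1 / (nq : ℝ)) * ∑ j, Real.exp (∑ c, δ₁ c * y j c)) +
      b * Real.log ((1 / (nq : ℝ)) * ∑ j, Real.exp (∑ c, δ₂ c * y j c)) := by
  rcases Nat.eq_zero_or_pos nq with h0 | hnq
  · subst h0
    simp
  · have hFin : Nonempty (Fin nq) := ⟨⟨0, hnq⟩⟩
    set u : Fin nq → ℝ := fun j => ∑ c, δ₁ c * y j c with hu
    set v : Fin nq → ℝ := fun j => ∑ c, δ₂ c * y j c with hv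
    have hinner : ∀ j, ∑ c, (a • δ₁ + b • δ₂) c * y j c = a * u j + b * v j :=
      fun j => lin_comb δ₁ δ₂ (y j) a b
    set U : ℝ := ∑ j, Real.exp (u j) with hU
    set V : ℝ := ∑ j, Real.exp (v j) with hV
    have hUpos : 0 < U := Finset.sum_pos (fun j _ => Real.exp_pos _) Finset.univ_nonempty
    have hVpos : 0 < V := Finset.sum_pos (fun j _ => Real.exp_pos _) Finset.univ_nonempty
    have hptwise : ∀ j, Real.exp (a * u j + b * v j) ≤
        (U ^ a * V ^ b) * (a * (Real.exp (u j) / U) + b * (Real.exp (v j) / V)) := by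
      intro j
      have hexp : Real.exp (a * u j + b * v j) = Real.exp (u j) ^ a * Real.exp (v j) ^ b := by
        rw [Real.exp_add, mul_comm a (u j), mul_comm b (v j), Real.exp_mul, Real.exp_mul]
      have hgm := Real.geom_mean_le_arith_mean2_weighted ha hb
        (div_nonneg (Real.exp_pos (u j)).le hUpos.le)
        (div_nonneg (Real.exp_pos (v j)).le hVpos.le) hab
      have hscale : (U ^ a * V ^ b) * ((Real.exp (u j) / U) ^ a * (Real.exp (v j) / V) ^ b) =
          Real.exp (u j) ^ a * Real.exp (v j) ^ b := by
        rw [Real.div_rpow (Real.exp_pos _).le hUpos.le,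
          Real.div_rpow (Real.exp_pos _).le hVpos.le]
        field_simp
      rw [hexp, ← hscale]
      apply mul_le_mul_of_nonneg_left hgm
      positivity
    have hsum : ∑ j, Real.exp (a * u j + b * v j) ≤ U ^ a * V ^ b := by
      calc ∑ j, Real.exp (a * u j + b * v j)
          ≤ ∑ j, (U ^ a * V ^ b) * (a * (Real.exp (u j) / U) + b * (Real.exp (v j) / V)) :=
            Finset.sum_le_sum (fun j _ => hptwise j)
        _ = (U ^ a * V ^ b) * (a * (U / U) + b * (V / V)) := by
            rw [← Finset.mul_sum]
            congr 1
            rw [Finset.sum_add_distrib]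
            congr 1
            · rw [← Finset.mul_sum, ← Finset.sum_div]
            · rw [← Finset.mul_sum, ← Finset.sum_div]
        _ = U ^ a * V ^ b := by
            rw [div_self hUpos.ne', div_self hVpos.ne', mul_one, mul_one, hab, mul_one]
    have hc : (0 : ℝ) < 1 / (nq : ℝ) := by positivity
    have hmain : (1 / (nq : ℝ)) * ∑ j, Real.exp (a * u j + b * v j) ≤
        ((1 / (nq : ℝ)) * U) ^ a * ((1 / (nq : ℝ)) * V) ^ b := by
      rw [Real.mul_rpow hc.le hUpos.le, Real.mul_rpow hc.le hVpos.le,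
        show (1 / (nq : ℝ)) ^ a * U ^ a * ((1 / (nq : ℝ)) ^ b * V ^ b) =
          ((1 / (nq : ℝ)) ^ a * (1 / (nq : ℝ)) ^ b) * (U ^ a * V ^ b) by ring,
        ← Real.rpow_add hc, hab, Real.rpow_one]
      exact mul_le_mul_of_nonneg_left hsum hc.le
    have hLpos : (0 : ℝ) < (1 / (nq : ℝ)) * ∑ j, Real.exp (a * u j + b * v j) := by
      apply mul_pos hc
      exact Finset.sum_pos (fun j _ => Real.exp_pos _) Finset.univ_nonempty
    calc Real.log ((1 / (nq : ℝ)) * ∑ j, Real.exp (∑ c, (a • δ₁ + b • δ₂) c * y j c))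
        = Real.log ((1 / (nq : ℝ)) * ∑ j, Real.exp (a * u j + b * v j)) := by
          congr 2
          exact Finset.sum_congr rfl (fun j _ => by rw [hinner j])
      _ ≤ Real.log (((1 / (nq : ℝ)) * U) ^ a * ((1 / (nq : ℝ)) * V) ^ b) :=
          Real.log_le_log hLpos hmain
      _ = a * Real.log ((1 / (nq : ℝ)) * U) + b * Real.log ((1 / (nq : ℝ)) * V) := by
          rw [Real.log_mul (Real.rpow_pos_of_pos (by positivity) a).ne'
            (Real.rpow_pos_of_pos (by positivity) b).ne',
            Real.log_rpow (by positivity), Real.log_rpow (by positivity)]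

lemma zhat_concave {d nq : ℕ} (y : Fin nq → Fin d → ℝ) (v : Fin d → ℝ) (δ₁ δ₂ : Fin d → ℝ)
    {a b : ℝ} (ha : 0 ≤ a) (hb : 0 ≤ b) (hab : a + b = 1) :
    a * zhat y δ₁ v + b * zhat y δ₂ v ≤ zhat y (a • δ₁ + b • δ₂) v := by
  rw [zhat, zhat, zhat, lin_comb δ₁ δ₂ v a b]
  have := logN_convex y δ₁ δ₂ ha hb hab
  ring_nf
  ring_nf at this
  linarith

lemma theta_cont (n m : ℕ) (hm1 : 1 ≤ m) (hmn : m ≤ n) {f : ℝ → Fin n → ℝ}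
    (hf : ∀ i, Continuous fun s => f s i) : Continuous fun s => thetaZ n m (f s) := by
  obtain ⟨T₁, hT₁sub, hT₁card⟩ :=
    Finset.exists_subset_card_eq (s := (univ : Finset (Fin n))) (n := m) (by simpa using hmn)
  have hne : ((univ : Finset (Fin n)).powersetCard m).Nonempty :=
    ⟨T₁, Finset.mem_powersetCard.mpr ⟨hT₁sub, hT₁card⟩⟩
  have hrw : (fun s => thetaZ n m (f s)) = fun s =>
      (univ.powersetCard m).inf' hne
        (fun T => if h2 : T.Nonempty then T.sup' h2 (f s) else 0) := by
    funext s
    rw [thetaZ, dif_pos hne]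
  rw [hrw]
  apply Continuous.finset_inf'_apply hne
  intro T hT
  have h2 : T.Nonempty := Finset.card_pos.mp
    (by rw [(Finset.mem_powersetCard.mp hT).2]; exact hm1)
  have hrw2 : (fun s => if h2 : T.Nonempty then T.sup' h2 (f s) else 0) =
      fun s => T.sup' h2 (f s) := by
    funext s
    rw [dif_pos h2]
  rw [hrw2]
  exact Continuous.finset_sup'_apply h2 (fun i _ => hf i)

lemma zhat_path_cont {d nq : ℕ} (y : Fin nq → Fin d → ℝ) (v : Fin d → ℝ) (δ₁ δ₂ : Fin d → ℝ) :
    Continuous fun s : ℝ => zhat y (δ₁ + s • (δ₂ - δ₁)) v := by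
  have hlin : ∀ u : Fin d → ℝ, Continuous fun s : ℝ => ∑ c, (δ₁ + s • (δ₂ - δ₁)) c * u c := by
    intro u
    apply continuous_finset_sum
    intro c _
    simp only [Pi.add_apply, Pi.smul_apply, Pi.sub_apply, smul_eq_mul]
    continuity
  have : (fun s : ℝ => zhat y (δ₁ + s • (δ₂ - δ₁)) v) = fun s =>
      (∑ c, (δ₁ + s • (δ₂ - δ₁)) c * v c) -
        Real.log ((1 / (nq : ℝ)) * ∑ j, Real.exp (∑ c, (δ₁ + s • (δ₂ - δ₁)) c * y j c)) := by
    funext s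
    rw [zhat]
  rw [this]
  apply Continuous.sub (hlin v)
  rcases Nat.eq_zero_or_pos nq with h0 | hnq
  · subst h0
    have : (fun s : ℝ => Real.log ((1 / ((0 : ℕ) : ℝ)) *
        ∑ j : Fin 0, Real.exp (∑ c, (δ₁ + s • (δ₂ - δ₁)) c * y j c))) = fun _ => Real.log 0 := by
      funext s
      simp
    rw [this]
    exact continuous_const
  · have hFin : Nonempty (Fin nq) := ⟨⟨0, hnq⟩⟩
    apply Continuous.log
    · exact continuous_const.mul (continuous_finset_sum _
        (fun j _ => Real.continuous_exp.comp (hlin (y j))))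
    · intro s
      have : (0 : ℝ) < (1 / (nq : ℝ)) * ∑ j, Real.exp (∑ c, (δ₁ + s • (δ₂ - δ₁)) c * y j c) := by
        apply mul_pos (by positivity)
        exact Finset.sum_pos (fun j _ => Real.exp_pos _) Finset.univ_nonempty
      exact this.ne'

/-- Proposition 1: `δ̂` is the `δ`-component of some optimal solution of
the constrained trimmed program iff `δ̂` maximizes
`J(δ) = (min_{w ∈ W(n_p, ν)} ∑ᵢ wᵢ ẑ_δ(xᵢ)) - λ R(δ)`, assuming the minimum of the
constrained program is attained and every optimal solution has `t > 0`. -/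
theorem trimmed_DRE_maxmin_equiv (d np nq m : ℕ) (hm1 : 1 ≤ m) (hmn : m ≤ np)
    (x : Fin np → Fin d → ℝ) (y : Fin nq → Fin d → ℝ)
    (R : (Fin d → ℝ) → ℝ) (hR : ConvexOn ℝ Set.univ R) (lam : ℝ) (hlam : 0 ≤ lam)
    (P : (Fin d → ℝ) × (Fin np → ℝ) × ℝ → ℝ)
    (hP : P = fun p =>
      (1 / (np : ℝ)) * ∑ i, p.2.1 i - ((m : ℝ) / np) * p.2.2 + lam * R p.1)
    (C : Set ((Fin d → ℝ) × (Fin np → ℝ) × ℝ))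
    (hC : C = {p | (∀ i, 0 ≤ p.2.1 i) ∧ 0 ≤ p.2.2 ∧
      ∀ i, zhat y p.1 (x i) ≥ p.2.2 - p.2.1 i})
    (J : (Fin d → ℝ) → ℝ)
    (hJ : J = fun δ =>
      sInf ((fun w => ∑ i, w i * zhat y δ (x i)) '' cappedSimplex np ((m : ℝ) / np))
        - lam * R δ)
    (hattain : ∃ p ∈ C, ∀ q ∈ C, P p ≤ P q)
    (hpos : ∀ p ∈ C, (∀ q ∈ C, P p ≤ P q) → 0 < p.2.2) :
    ∀ δhat : Fin d → ℝ,
      (∃ ε t, (δhat, ε, t) ∈ C ∧ ∀ q ∈ C, P (δhat, ε, t) ≤ P q) ↔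
      (∀ δ, J δ ≤ J δhat) := by
  have hn : 0 < np := lt_of_lt_of_le hm1 hmn
  obtain ⟨θf, hθf⟩ : ∃ θf : (Fin d → ℝ) → ℝ,
      ∀ δ, θf δ = thetaZ np m (fun i => zhat y δ (x i)) := ⟨_, fun _ => rfl⟩
  obtain ⟨M, hMdef⟩ : ∃ M : (Fin d → ℝ) → ℝ, ∀ δ,
      M δ = ((m : ℝ) / np) * θf δ - (1 / (np : ℝ)) * ∑ i, max 0 (θf δ - zhat y δ (x i)) :=
    ⟨_, fun _ => rfl⟩
  have hsInf : ∀ δ, sInf ((fun w => ∑ i, w i * zhat y δ (x i)) ''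
      cappedSimplex np ((m : ℝ) / np)) = M δ := by
    intro δ
    rw [hMdef, hθf]
    exact sInf_eval np m hm1 hmn _
  have hJval : ∀ δ, J δ = M δ - lam * R δ := by
    intro δ
    simp only [hJ]
    rw [hsInf δ]
  have hCmem : ∀ p : (Fin d → ℝ) × (Fin np → ℝ) × ℝ, p ∈ C ↔
      ((∀ i, 0 ≤ p.2.1 i) ∧ 0 ≤ p.2.2 ∧ ∀ i, zhat y p.1 (x i) ≥ p.2.2 - p.2.1 i) := by
    intro p
    rw [hC]
    exact Iff.rfl
  have hPval : ∀ p : (Fin d → ℝ) × (Fin np → ℝ) × ℝ,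
      P p = (1 / (np : ℝ)) * ∑ i, p.2.1 i - ((m : ℝ) / np) * p.2.2 + lam * R p.1 := by
    intro p
    rw [hP]
  have hMT : ∀ δ, ∃ T : Finset (Fin np), T.card = m ∧ (∀ i ∈ T, zhat y δ (x i) ≤ θf δ) ∧
      (∀ i ∉ T, θf δ ≤ zhat y δ (x i)) ∧ M δ = (1 / (np : ℝ)) * ∑ i ∈ T, zhat y δ (x i) := by
    intro δ
    obtain ⟨T, hT, h1, h2⟩ := theta_sandwich np m hm1 hmn (fun i => zhat y δ (x i))
    refine ⟨T, hT, ?_, ?_, ?_⟩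
    · intro i hi; rw [hθf]; exact h1 i hi
    · intro i hi; rw [hθf]; exact h2 i hi
    · rw [hMdef, hθf]; exact key_eq np m hT h1 h2
  have hallt : ∀ δ (t : ℝ),
      ((m : ℝ) / np) * t - (1 / (np : ℝ)) * ∑ i, max 0 (t - zhat y δ (x i)) ≤ M δ := by
    intro δ t
    obtain ⟨T, hT, h1, h2, hMeq⟩ := hMT δ
    rw [hMeq]
    exact all_t np m hT t
  have hMle : ∀ δ (T' : Finset (Fin np)), T'.card = m →
      M δ ≤ (1 / (np : ℝ)) * ∑ i ∈ T', zhat y δ (x i) := by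
    intro δ T' hT'
    obtain ⟨T, hT, h1, h2, hMeq⟩ := hMT δ
    rw [hMeq]
    have h := lb np m hT h1 h2 (indicator_mem_capped np m hn hT')
    rwa [sum_ite_mem_mul] at h
  have hrecon : ∀ δ, 0 ≤ θf δ →
      ((δ, fun i => max 0 (θf δ - zhat y δ (x i)), θf δ) ∈ C ∧
        P (δ, fun i => max 0 (θf δ - zhat y δ (x i)), θf δ) = lam * R δ - M δ) := by
    intro δ hθ
    constructor
    · rw [hCmem]
      refine ⟨fun i => le_max_left _ _, hθ, fun i => ?_⟩
      show zhat y δ (x i) ≥ θf δ - max 0 (θf δ - zhat y δ (x i))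
      linarith [le_max_right 0 (θf δ - zhat y δ (x i))]
    · rw [hPval]
      dsimp only
      rw [hMdef]
      ring
  have hlow : ∀ p ∈ C, lam * R p.1 - M p.1 ≤ P p := by
    intro p hp
    rw [hCmem] at hp
    obtain ⟨h0, ht0, hcons⟩ := hp
    rw [hPval]
    have h1 : ∑ i, max 0 (p.2.2 - zhat y p.1 (x i)) ≤ ∑ i, p.2.1 i :=
      Finset.sum_le_sum (fun i _ => max_le (h0 i) (by linarith [hcons i]))
    have h2 := hallt p.1 p.2.2
    have h3 : (1 / (np : ℝ)) * ∑ i, max 0 (p.2.2 - zhat y p.1 (x i)) ≤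
        (1 / (np : ℝ)) * ∑ i, p.2.1 i := mul_le_mul_of_nonneg_left h1 (by positivity)
    linarith
  have hzeroopt : ∀ p ∈ C, (∀ q ∈ C, P p ≤ P q) → 0 < θf p.1 := by
    intro p hp hopt
    by_contra hcon
    push_neg at hcon
    obtain ⟨T, hT, h1, h2, hMeq⟩ := hMT p.1
    have hp' := hp
    rw [hCmem] at hp'
    obtain ⟨h0, ht0, hcons⟩ := hp'
    have hp0C : (p.1, fun i => max 0 (0 - zhat y p.1 (x i)), (0 : ℝ)) ∈ C := by
      rw [hCmem]
      refine ⟨fun i => le_max_left _ _, le_rfl, fun i => ?_⟩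
      show zhat y p.1 (x i) ≥ 0 - max 0 (0 - zhat y p.1 (x i))
      linarith [le_max_right 0 (0 - zhat y p.1 (x i))]
    have hp0le : P (p.1, fun i => max 0 (0 - zhat y p.1 (x i)), (0 : ℝ)) ≤ P p := by
      rw [hPval, hPval]
      dsimp only
      have key := tdre_zero_min np m hT h1 hcon ht0
      have h1' : ∑ i, max 0 (p.2.2 - zhat y p.1 (x i)) ≤ ∑ i, p.2.1 i :=
        Finset.sum_le_sum (fun i _ => max_le (h0 i) (by linarith [hcons i]))
      have hscale : (1 / (np : ℝ)) * ∑ i, max 0 (0 - zhat y p.1 (x i)) ≤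
          (1 / (np : ℝ)) * (∑ i, p.2.1 i - (m : ℝ) * p.2.2) :=
        mul_le_mul_of_nonneg_left (by linarith) (by positivity)
      have hexpand : (1 / (np : ℝ)) * (∑ i, p.2.1 i - (m : ℝ) * p.2.2) =
          (1 / (np : ℝ)) * ∑ i, p.2.1 i - ((m : ℝ) / np) * p.2.2 := by ring
      rw [hexpand] at hscale
      linarith
    have hp0opt : ∀ q ∈ C, P (p.1, fun i => max 0 (0 - zhat y p.1 (x i)), (0 : ℝ)) ≤ P q :=
      fun q hq => le_trans hp0le (hopt q hq)
    have hfalse := hpos _ hp0C hp0opt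
    exact lt_irrefl (0 : ℝ) hfalse
  have hoptval : ∀ p ∈ C, (∀ q ∈ C, P p ≤ P q) → P p = lam * R p.1 - M p.1 := by
    intro p hp hopt
    have hθ := hzeroopt p hp hopt
    obtain ⟨hmem, hval⟩ := hrecon p.1 (le_of_lt hθ)
    have hle := hopt _ hmem
    rw [hval] at hle
    have hl := hlow p hp
    linarith
  have hconv : ∀ δ₁ δ₂ (a b : ℝ), 0 ≤ a → 0 ≤ b → a + b = 1 →
      a * M δ₁ + b * M δ₂ ≤ M (a • δ₁ + b • δ₂) := by
    intro δ₁ δ₂ a b ha hb hab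
    obtain ⟨T, hT, h1, h2, hMeq⟩ := hMT (a • δ₁ + b • δ₂)
    rw [hMeq]
    have hz : ∀ i ∈ T, a * zhat y δ₁ (x i) + b * zhat y δ₂ (x i) ≤
        zhat y (a • δ₁ + b • δ₂) (x i) := fun i _ => zhat_concave y (x i) δ₁ δ₂ ha hb hab
    have hsum : a * ∑ i ∈ T, zhat y δ₁ (x i) + b * ∑ i ∈ T, zhat y δ₂ (x i) ≤
        ∑ i ∈ T, zhat y (a • δ₁ + b • δ₂) (x i) := by
      rw [Finset.mul_sum, Finset.mul_sum, ← Finset.sum_add_distrib]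
      exact Finset.sum_le_sum hz
    have e1' : a * M δ₁ ≤ a * ((1 / (np : ℝ)) * ∑ i ∈ T, zhat y δ₁ (x i)) :=
      mul_le_mul_of_nonneg_left (hMle δ₁ T hT) ha
    have e2' : b * M δ₂ ≤ b * ((1 / (np : ℝ)) * ∑ i ∈ T, zhat y δ₂ (x i)) :=
      mul_le_mul_of_nonneg_left (hMle δ₂ T hT) hb
    have e3 : (1 / (np : ℝ)) * (a * ∑ i ∈ T, zhat y δ₁ (x i) +
        b * ∑ i ∈ T, zhat y δ₂ (x i)) ≤
        (1 / (np : ℝ)) * ∑ i ∈ T, zhat y (a • δ₁ + b • δ₂) (x i) :=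
      mul_le_mul_of_nonneg_left hsum (by positivity)
    nlinarith [e1', e2', e3]
  have hcontθ : ∀ δ₁ δ₂ : Fin d → ℝ, Continuous fun s : ℝ => θf (δ₁ + s • (δ₂ - δ₁)) := by
    intro δ₁ δ₂
    have hrw : (fun s : ℝ => θf (δ₁ + s • (δ₂ - δ₁))) =
        fun s => thetaZ np m (fun i => zhat y (δ₁ + s • (δ₂ - δ₁)) (x i)) := by
      funext s
      rw [hθf]
    rw [hrw]
    exact theta_cont np m hm1 hmn (f := fun s i => zhat y (δ₁ + s • (δ₂ - δ₁)) (x i))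
      (fun i => zhat_path_cont y (x i) δ₁ δ₂)
  have hIVT : ∀ δ₁ δ₂ : Fin d → ℝ, 0 < θf δ₁ → θf δ₂ < 0 →
      ∃ s : ℝ, 0 ≤ s ∧ s ≤ 1 ∧ θf ((1 - s) • δ₁ + s • δ₂) = 0 := by
    intro δ₁ δ₂ hp hn2
    have hcont := (hcontθ δ₁ δ₂).continuousOn (s := Set.Icc (0 : ℝ) 1)
    have himg := intermediate_value_Icc' (by norm_num : (0 : ℝ) ≤ 1) hcont
    have h0mem : (0 : ℝ) ∈ Set.Icc ((fun s : ℝ => θf (δ₁ + s • (δ₂ - δ₁))) 1)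
        ((fun s : ℝ => θf (δ₁ + s • (δ₂ - δ₁))) 0) := by
      constructor
      · show θf (δ₁ + (1 : ℝ) • (δ₂ - δ₁)) ≤ 0
        rw [show δ₁ + (1 : ℝ) • (δ₂ - δ₁) = δ₂ by funext i; simp]
        exact le_of_lt hn2
      · show 0 ≤ θf (δ₁ + (0 : ℝ) • (δ₂ - δ₁))
        rw [show δ₁ + (0 : ℝ) • (δ₂ - δ₁) = δ₁ by funext i; simp]
        exact le_of_lt hp
    obtain ⟨s, hs, hfs⟩ := himg h0mem
    refine ⟨s, hs.1, hs.2, ?_⟩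
    rw [show (1 - s) • δ₁ + s • δ₂ = δ₁ + s • (δ₂ - δ₁) by
      funext i
      simp only [Pi.add_apply, Pi.smul_apply, Pi.sub_apply, smul_eq_mul]
      ring]
    exact hfs
  have hcontra : ∀ p ∈ C, (∀ q ∈ C, P p ≤ P q) →
      ∀ δ, lam * R δ - M δ ≤ P p → ¬(θf δ < 0) := by
    intro p hpC hpopt δ hFle hθneg
    have hθp := hzeroopt p hpC hpopt
    obtain ⟨s, hs0, hs1, hθs⟩ := hIVT p.1 δ hθp hθneg
    have hc := hconv p.1 δ (1 - s) s (by linarith) hs0 (by ring)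
    have hRc := hR.2 (Set.mem_univ p.1) (Set.mem_univ δ) (by linarith : (0 : ℝ) ≤ 1 - s)
      hs0 (by ring)
    have hRc' : lam * R ((1 - s) • p.1 + s • δ) ≤
        lam * ((1 - s) * R p.1 + s * R δ) := by
      apply mul_le_mul_of_nonneg_left _ hlam
      simpa using hRc
    have hVp : lam * R p.1 - M p.1 ≤ P p := hlow p hpC
    have e1 : (1 - s) * (lam * R p.1 - M p.1) ≤ (1 - s) * P p :=
      mul_le_mul_of_nonneg_left hVp (by linarith)
    have e2 : s * (lam * R δ - M δ) ≤ s * P p := mul_le_mul_of_nonneg_left hFle hs0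
    have hFs : lam * R ((1 - s) • p.1 + s • δ) - M ((1 - s) • p.1 + s • δ) ≤ P p := by
      nlinarith [hc, hRc', e1, e2]
    obtain ⟨hmem, hval⟩ := hrecon ((1 - s) • p.1 + s • δ) hθs.ge
    have hfinal := hpos _ hmem (fun q hq => by rw [hval]; exact le_trans hFs (hpopt q hq))
    have hfinal' : (0 : ℝ) < θf ((1 - s) • p.1 + s • δ) := hfinal
    rw [hθs] at hfinal'
    exact lt_irrefl 0 hfinal'
  intro δhat
  constructor
  · rintro ⟨ε, t, hmemC, hopt⟩ δ
    rw [hJval, hJval]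
    have hVeq := hoptval (δhat, ε, t) hmemC hopt
    dsimp only at hVeq
    rcases le_or_gt 0 (θf δ) with hθ | hθ
    · obtain ⟨hmem, hval⟩ := hrecon δ hθ
      have hle := hopt _ hmem
      rw [hval, hVeq] at hle
      linarith
    · by_contra hcon
      push_neg at hcon
      refine hcontra (δhat, ε, t) hmemC hopt δ ?_ hθ
      rw [hVeq]
      linarith
  · intro hJmax
    obtain ⟨p₀, hp₀C, hp₀opt⟩ := hattain
    have hVeq := hoptval p₀ hp₀C hp₀opt
    have hFhat : lam * R δhat - M δhat ≤ lam * R p₀.1 - M p₀.1 := by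
      have h := hJmax p₀.1
      rw [hJval, hJval] at h
      linarith
    rcases le_or_gt 0 (θf δhat) with hθ | hθ
    · obtain ⟨hmem, hval⟩ := hrecon δhat hθ
      exact ⟨_, _, hmem, fun q hq => by
        rw [hval]
        exact le_trans (le_trans hFhat (le_of_eq hVeq.symm)) (hp₀opt q hq)⟩
    · exact absurd hθ (hcontra p₀ hp₀C hp₀opt δhat (by rw [hVeq]; exact hFhat) hθ).elim
end

section
/- (Lemma 1, restricted strong convexity of the negative Hessian.) Fix y_1, …, y_{n_q} ∈ ℝ^d and δ ∈ ℝ^d. Suppose there are constants 0 < c₁ ≤ c₂ with c₁ ≤ exp⟨δ, y_j⟩ ≤ c₂ for all j, and set C_r := c₂/c₁. Suppose further that for the vector u ∈ ℝ^d the empirical covariance satisfies the restricted strong convexity bound (1/n_q) Σ_{j=1}^{n_q} ⟨u, y_j − ȳ⟩² ≥ κ'₁ ‖u‖₂² − (c/√n_q) ‖u‖₁², where ȳ = (1/n_q)Σ_j y_j and κ'₁ > 0, c > 0. Then for every ν ≥ 0, ν·(Σ_{j=1}^{n_q} π_j(δ) ⟨u, y_j⟩² − (Σ_{j=1}^{n_q}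 π_j(δ) ⟨u, y_j⟩)²) ≥ (ν κ'₁ / (2 C_r²)) ‖u‖₂² − (ν c / (2 C_r² √n_q)) ‖u‖₁², where π_j(δ) := exp⟨δ, y_j⟩ / Σ_{k=1}^{n_q} exp⟨δ, y_k⟩ are the softmax weights. -/
open Finset

lemma softmax_variance_RSC_aux (ν κ c Cr s P Q : ℝ) (hCr : Cr ≠ 0) (hs : s ≠ 0) :
    ν * ((κ * P - (c / s) * Q) / (2 * Cr ^ 2))
      = (ν * κ / (2 * Cr ^ 2)) * P - (ν * c / (2 * Cr ^ 2 * s)) * Q := by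
  field_simp

/-- Lemma 1, restricted strong convexity of the negative Hessian:
if `c₁ ≤ exp⟨δ, yⱼ⟩ ≤ c₂` for all `j` with `0 < c₁ ≤ c₂`, `C_r = c₂/c₁`, and the
empirical covariance satisfies the RSC bound along `u`, then for every `ν ≥ 0` the
softmax-weighted variance satisfies
`ν (∑ πⱼ ⟨u,yⱼ⟩² - (∑ πⱼ ⟨u,yⱼ⟩)²) ≥ (νκ'₁/(2C_r²))‖u‖₂² - (νc/(2C_r²√n_q))‖u‖₁²`. -/
theorem softmax_variance_RSC (d nq : ℕ) (y : Fin nq → Fin d → ℝ) (δ : Fin d → ℝ)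
    (c₁ c₂ : ℝ) (hc₁ : 0 < c₁) (hc₁₂ : c₁ ≤ c₂)
    (hbound : ∀ j, c₁ ≤ Real.exp (∑ a, δ a * y j a) ∧
      Real.exp (∑ a, δ a * y j a) ≤ c₂)
    (Cr : ℝ) (hCr : Cr = c₂ / c₁)
    (u : Fin d → ℝ) (κ'₁ c : ℝ) (hκ : 0 < κ'₁) (hc : 0 < c)
    (ybar : Fin d → ℝ) (hybar : ybar = fun a => (1 / (nq : ℝ)) * ∑ j, y j a)
    (hRSC : (1 / (nq : ℝ)) * ∑ j, (∑ a, u a * (y j a - ybar a)) ^ 2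
      ≥ κ'₁ * (∑ a, (u a) ^ 2) - (c / Real.sqrt nq) * (∑ a, |u a|) ^ 2)
    (ν : ℝ) (hν : 0 ≤ ν)
    (π : Fin nq → ℝ)
    (hπ : π = fun j => Real.exp (∑ a, δ a * y j a)
      / ∑ k, Real.exp (∑ a, δ a * y k a)) :
    ν * ((∑ j, π j * (∑ a, u a * y j a) ^ 2) - (∑ j, π j * (∑ a, u a * y j a)) ^ 2)
      ≥ (ν * κ'₁ / (2 * Cr ^ 2)) * (∑ a, (u a) ^ 2)
        - (ν * c / (2 * Cr ^ 2 * Real.sqrt nq)) * (∑ a, |u a|) ^ 2 := by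
  have hc₂ : 0 < c₂ := lt_of_lt_of_le hc₁ hc₁₂
  have hCr1 : 1 ≤ Cr := by rw [hCr]; exact (one_le_div hc₁).mpr hc₁₂
  have hCrpos : 0 < Cr := lt_of_lt_of_le one_pos hCr1
  by_cases hnq : nq = 0
  · subst hnq
    have hsq : (∑ a, (u a) ^ 2) = 0 := by
      have h0 : Real.sqrt (0 : ℕ) = 0 := by simp
      have : (0 : ℝ) ≥ κ'₁ * (∑ a, (u a) ^ 2) - (c / Real.sqrt (0:ℕ)) * (∑ a, |u a|) ^ 2 := by
        simpa using hRSC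
      rw [h0, div_zero, zero_mul, sub_zero] at this
      have hnn : 0 ≤ ∑ a, (u a) ^ 2 := Finset.sum_nonneg fun a _ => sq_nonneg (u a)
      nlinarith
    have h0 : Real.sqrt ((0:ℕ) : ℝ) = 0 := by simp
    simp [hsq, h0]
  · have hnqpos : (0 : ℝ) < nq := by exact_mod_cast Nat.pos_of_ne_zero hnq
    set z : Fin nq → ℝ := fun j => ∑ a, u a * y j a with hz
    set S : ℝ := ∑ k, Real.exp (∑ a, δ a * y k a) with hS
    have hSlb : (nq : ℝ) * c₁ ≤ S := by
      rw [hS]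
      calc (nq : ℝ) * c₁ = ∑ _k : Fin nq, c₁ := by
            rw [Finset.sum_const, Finset.card_univ, Fintype.card_fin, nsmul_eq_mul]
        _ ≤ _ := Finset.sum_le_sum fun k _ => (hbound k).1
    have hSub : S ≤ (nq : ℝ) * c₂ := by
      rw [hS]
      calc S ≤ ∑ _k : Fin nq, c₂ := Finset.sum_le_sum fun k _ => (hbound k).2
        _ = (nq : ℝ) * c₂ := by
            rw [Finset.sum_const, Finset.card_univ, Fintype.card_fin, nsmul_eq_mul]
    have hSpos : 0 < S := lt_of_lt_of_le (by positivity) hSlb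
    have hπlb : ∀ j, c₁ / ((nq : ℝ) * c₂) ≤ π j := by
      intro j
      rw [hπ]
      exact div_le_div₀ (Real.exp_pos _).le (hbound j).1 hSpos hSub
    have hπsum : ∑ j, π j = 1 := by
      rw [hπ]
      simp only [← Finset.sum_div]
      exact div_self (ne_of_gt hSpos)
    set μ : ℝ := ∑ j, π j * z j with hμ
    -- variance identity
    have hvar : (∑ j, π j * z j ^ 2) - μ ^ 2 = ∑ j, π j * (z j - μ) ^ 2 := by
      have h1 : ∑ j, π j * (z j - μ) ^ 2
          = ∑ j, (π j * z j ^ 2 - 2 * μ * (π j * z j) + μ ^ 2 * π j) :=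
        Finset.sum_congr rfl fun j _ => by ring
      rw [h1, Finset.sum_add_distrib, Finset.sum_sub_distrib, ← Finset.mul_sum,
        ← Finset.mul_sum, hπsum, ← hμ]
      ring
    -- mean of z
    set m : ℝ := ∑ a, u a * ybar a with hm
    have hmean : ∑ j, z j = (nq : ℝ) * m := by
      rw [hm, hybar]
      calc ∑ j, z j = ∑ a, ∑ j, u a * y j a := Finset.sum_comm
        _ = (nq : ℝ) * ∑ a, u a * ((1 / (nq : ℝ)) * ∑ j, y j a) := by
            rw [Finset.mul_sum]
            refine Finset.sum_congr rfl fun a _ => ?_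
            rw [← Finset.mul_sum]
            field_simp
    have hinner : ∀ j, (∑ a, u a * (y j a - ybar a)) = z j - m := by
      intro j
      simp only [mul_sub, Finset.sum_sub_distrib, hz, hm]
    -- mean minimizes sum of squares
    have hminim : ∑ j, (z j - m) ^ 2 ≤ ∑ j, (z j - μ) ^ 2 := by
      have hdiff : ∑ j, (z j - μ) ^ 2
          = ∑ j, ((z j - m) ^ 2 + (2 * (m - μ) * z j + (μ ^ 2 - m ^ 2))) :=
        Finset.sum_congr rfl fun j _ => by ring
      rw [hdiff, Finset.sum_add_distrib, Finset.sum_add_distrib, ← Finset.mul_sum,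
        Finset.sum_const, Finset.card_univ, Fintype.card_fin, nsmul_eq_mul, hmean]
      nlinarith [sq_nonneg (m - μ), hnqpos]
    -- lower bound on variance
    have hVar : (∑ j, π j * z j ^ 2) - μ ^ 2
        ≥ ((1 / (nq : ℝ)) * ∑ j, (z j - m) ^ 2) / Cr := by
      rw [hvar]
      have h2 : ∑ j, (c₁ / ((nq : ℝ) * c₂)) * (z j - μ) ^ 2 ≤ ∑ j, π j * (z j - μ) ^ 2 :=
        Finset.sum_le_sum fun j _ =>
          mul_le_mul_of_nonneg_right (hπlb j) (sq_nonneg _)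
      rw [← Finset.mul_sum] at h2
      have h3 : ((1 / (nq : ℝ)) * ∑ j, (z j - m) ^ 2) / Cr
          ≤ (c₁ / ((nq : ℝ) * c₂)) * ∑ j, (z j - μ) ^ 2 := by
        have heq : ((1 / (nq : ℝ)) * ∑ j, (z j - m) ^ 2) / Cr
            = (c₁ / ((nq : ℝ) * c₂)) * ∑ j, (z j - m) ^ 2 := by
          rw [hCr]; field_simp
        rw [heq]
        exact mul_le_mul_of_nonneg_left hminim (by positivity)
      linarith
    -- combine
    set A : ℝ := (1 / (nq : ℝ)) * ∑ j, (z j - m) ^ 2 with hA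
    have hA0 : 0 ≤ A := by
      apply mul_nonneg (by positivity)
      exact Finset.sum_nonneg fun j _ => sq_nonneg _
    set B : ℝ := κ'₁ * (∑ a, (u a) ^ 2) - (c / Real.sqrt nq) * (∑ a, |u a|) ^ 2 with hB
    have hAB : A ≥ B := by
      rw [hA, hB]
      have : ∑ j, (∑ a, u a * (y j a - ybar a)) ^ 2 = ∑ j, (z j - m) ^ 2 :=
        Finset.sum_congr rfl fun j _ => by rw [hinner j]
      rw [← this]
      exact hRSC
    have hVarB : (∑ j, π j * z j ^ 2) - μ ^ 2 ≥ B / (2 * Cr ^ 2) := by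
      rcases le_or_gt B 0 with hBle | hBpos
      · have h1 : B / (2 * Cr ^ 2) ≤ 0 :=
          div_nonpos_of_nonpos_of_nonneg hBle (by positivity)
        have h2 : 0 ≤ A / Cr := div_nonneg hA0 hCrpos.le
        linarith
      · have h1 : B / (2 * Cr ^ 2) ≤ B / Cr := by
          apply div_le_div_of_nonneg_left hBpos.le hCrpos
          nlinarith
        have h2 : B / Cr ≤ A / Cr := by gcongr
        linarith
    have hsqrt : (0 : ℝ) < Real.sqrt nq := Real.sqrt_pos.mpr hnqpos
    have key : ∀ P Q : ℝ, ν * ((κ'₁ * P - (c / Real.sqrt nq) * Q) / (2 * Cr ^ 2))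
        = (ν * κ'₁ / (2 * Cr ^ 2)) * P - (ν * c / (2 * Cr ^ 2 * Real.sqrt nq)) * Q :=
      fun P Q => softmax_variance_RSC_aux ν κ'₁ c Cr (Real.sqrt nq) P Q
        (ne_of_gt hCrpos) (ne_of_gt hsqrt)
    have hRHS : (ν * κ'₁ / (2 * Cr ^ 2)) * (∑ a, (u a) ^ 2)
        - (ν * c / (2 * Cr ^ 2 * Real.sqrt nq)) * (∑ a, |u a|) ^ 2
        = ν * (B / (2 * Cr ^ 2)) := by
      rw [hB, key]
    rw [hRHS]
    exact mul_le_mul_of_nonneg_left hVarB hν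
end

section
/- (Theorem 1, deterministic core.) Fix x_1, …, x_{n_p} ∈ ℝ^d and y_1, …, y_{n_q} ∈ ℝ^d and define L(δ, w) := Σ_{i=1}^{n_p} w_i (⟨δ, x_i⟩ − log N̂(δ)) with log N̂(δ) := log((1/n_q) Σ_j exp⟨δ, y_j⟩). Let δ* ∈ ℝ^d with support S := {i : δ*_i ≠ 0} of size |S| ≤ k (k ≥ 1 an integer), let û ∈ ℝ^d with ‖û‖₁ ≤ ρ, set δ̂ := δ* + û, and let ŵ, w* ∈ ℝ^{n_p}. Suppose: (i) ⟨∇_δ L(δ̂, w*) − ∇_δ L(δ*, w*), û⟩ ≥ κ₁ ‖û‖₂² − τ₁ ‖û‖₁² for constants κ₁ > 0, τ₁ ≥ 0; (ii) ⟨∇_δ L(δ̂, ŵ) − ∇_δ L(δ̂, w*), û⟩ ≥ −κ₂ ‖û‖₂² − τ₂ ‖û‖₁ for constants κ₂ ≥ 0, τ₂ ≥ 0; (iii) there exists a subgradient g of the ℓ1 norm at δ̂ with ∇_δ L(δ̂, ŵ) = −λ g; (iv) λ ≥ 2(‖∇_δ L(δ*, w*)‖_∞ + ρ τ₁ + τ₂);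 and (v) κ₁ > κ₂. Then ‖δ̂ − δ*‖₂ ≤ (1/(κ₁ − κ₂)) · (3 √k λ / 2). -/
open Finset RealInnerProductSpace

set_option maxHeartbeats 1000000 in
/-- Theorem 1, deterministic core: under restricted strong convexity (i),
coherence (ii), ℓ1-stationarity (iii), the regularization-strength condition (iv) and
`κ₂ < κ₁` (v), the estimation error satisfies
`‖δ̂ - δ*‖₂ ≤ (1/(κ₁ - κ₂)) · (3 √k λ / 2)`. -/
theorem trimmed_DRE_error_bound (d np nq k : ℕ) (hk : 1 ≤ k)
    (x : Fin np → EuclideanSpace ℝ (Fin d)) (y : Fin nq → EuclideanSpace ℝ (Fin d))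
    (L : EuclideanSpace ℝ (Fin d) → (Fin np → ℝ) → ℝ)
    (hL : L = fun δ w => ∑ i, w i *
      (⟪δ, x i⟫ - Real.log ((1 / (nq : ℝ)) * ∑ j, Real.exp ⟪δ, y j⟫)))
    (gL : EuclideanSpace ℝ (Fin d) → (Fin np → ℝ) → EuclideanSpace ℝ (Fin d))
    (hgL : ∀ δ w, HasGradientAt (fun δ' => L δ' w) (gL δ w) δ)
    (δstar : EuclideanSpace ℝ (Fin d)) (S : Finset (Fin d))
    (hS : S = Finset.univ.filter (fun i => δstar i ≠ 0)) (hScard : S.card ≤ k)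
    (uhat : EuclideanSpace ℝ (Fin d)) (ρ : ℝ) (huρ : ∑ i, |uhat i| ≤ ρ)
    (δhat : EuclideanSpace ℝ (Fin d)) (hδhat : δhat = δstar + uhat)
    (what wstar : Fin np → ℝ)
    (κ₁ τ₁ κ₂ τ₂ lam : ℝ) (hκ₁ : 0 < κ₁) (hτ₁ : 0 ≤ τ₁) (hκ₂ : 0 ≤ κ₂) (hτ₂ : 0 ≤ τ₂)
    -- (i) restricted strong convexity
    (hi : ⟪gL δhat wstar - gL δstar wstar, uhat⟫
      ≥ κ₁ * ‖uhat‖ ^ 2 - τ₁ * (∑ i, |uhat i|) ^ 2)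
    -- (ii) coherence
    (hii : ⟪gL δhat what - gL δhat wstar, uhat⟫
      ≥ -κ₂ * ‖uhat‖ ^ 2 - τ₂ * (∑ i, |uhat i|))
    -- (iii) ℓ1-stationarity: there is a subgradient g of the ℓ1 norm at δ̂ with
    -- ∇L(δ̂, ŵ) = -λ g
    (hiii : ∃ g : EuclideanSpace ℝ (Fin d),
      (∀ v : EuclideanSpace ℝ (Fin d),
        (∑ i, |v i|) ≥ (∑ i, |δhat i|) + ⟪g, v - δhat⟫) ∧
      gL δhat what = -lam • g)
    -- (iv) regularization strength
    (hiv : lam ≥ 2 * ((⨆ i, |gL δstar wstar i|) + ρ * τ₁ + τ₂))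
    -- (v)
    (hv : κ₂ < κ₁) :
    ‖δhat - δstar‖ ≤ (1 / (κ₁ - κ₂)) * (3 * Real.sqrt k * lam / 2) := by
  obtain ⟨g, hsub, heq⟩ := hiii
  set u := uhat with hu
  set T : ℝ := ∑ i, |u i| with hT
  set N : ℝ := ‖u‖ with hN
  have hN0 : 0 ≤ N := norm_nonneg _
  have hT0 : 0 ≤ T := Finset.sum_nonneg fun i _ => abs_nonneg _
  set M : ℝ := ⨆ i, |gL δstar wstar i| with hM
  have hM0 : 0 ≤ M := Real.iSup_nonneg fun i => abs_nonneg _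
  have hρ0 : 0 ≤ ρ := le_trans hT0 huρ
  have hlam0 : 0 ≤ lam := by nlinarith [mul_nonneg hρ0 hτ₁]
  have hk0 : (0:ℝ) ≤ Real.sqrt k := Real.sqrt_nonneg _
  -- sums over S and its complement
  set s : ℝ := ∑ i ∈ S, |u i| with hs
  set c : ℝ := ∑ i ∈ Sᶜ, |u i| with hc
  have hsc : s + c = T := Finset.sum_add_sum_compl S _
  have hs0 : 0 ≤ s := Finset.sum_nonneg fun i _ => abs_nonneg _
  have hc0 : 0 ≤ c := Finset.sum_nonneg fun i _ => abs_nonneg _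
  -- decomposability: ‖δ*‖₁ - ‖δ̂‖₁ ≤ s - c
  have hdecomp : (∑ i, |δstar i|) - (∑ i, |δhat i|) ≤ s - c := by
    have h1 : (∑ i, |δstar i|) = ∑ i ∈ S, |δstar i| := by
      rw [← Finset.sum_add_sum_compl S]
      have : ∑ i ∈ Sᶜ, |δstar i| = 0 := by
        apply Finset.sum_eq_zero
        intro i hi'
        have : δstar i = 0 := by
          by_contra h
          exact (Finset.mem_compl.1 hi') (by simp [hS, h])
        simp [this]
      linarith
    have h2 : (∑ i, |δhat i|) = (∑ i ∈ S, |δhat i|) + ∑ i ∈ Sᶜ, |δhat i| :=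
      (Finset.sum_add_sum_compl S _).symm
    have hpt : ∀ i, δhat i = δstar i + u i := by
      intro i; rw [hδhat]; rfl
    have h3 : ∑ i ∈ Sᶜ, |δhat i| = c := by
      apply Finset.sum_congr rfl
      intro i hi'
      have hz : δstar i = 0 := by
        by_contra h
        exact (Finset.mem_compl.1 hi') (by simp [hS, h])
      rw [hpt i, hz, zero_add]
    have h4 : ∀ i ∈ S, |δstar i| - |δhat i| ≤ |u i| := by
      intro i _
      rw [hpt i]
      have := abs_add_le (δstar i + u i) (-u i)
      simp at this
      linarith [this]
    have h5 : (∑ i ∈ S, |δstar i|) - (∑ i ∈ S, |δhat i|) ≤ s := by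
      rw [← Finset.sum_sub_distrib]
      exact Finset.sum_le_sum h4
    rw [h1, h2, h3]; linarith
  -- ℓ1/ℓ2 bound on S: s ≤ √k * N
  have hsN : s ≤ Real.sqrt k * N := by
    have hsq : s ^ 2 ≤ (k : ℝ) * N ^ 2 := by
      have h1 : s ^ 2 ≤ (S.card : ℝ) * ∑ i ∈ S, |u i| ^ 2 :=
        sq_sum_le_card_mul_sum_sq
      have h2 : (∑ i ∈ S, |u i| ^ 2) ≤ ∑ i, |u i| ^ 2 :=
        Finset.sum_le_sum_of_subset_of_nonneg (Finset.subset_univ S)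
          (fun i _ _ => by positivity)
      have h3 : (∑ i, |u i| ^ 2) = N ^ 2 := by
        rw [hN, EuclideanSpace.norm_eq, Real.sq_sqrt (by positivity)]
        simp [Real.norm_eq_abs]
      have hcard : (S.card : ℝ) ≤ (k : ℝ) := Nat.cast_le.2 hScard
      calc s ^ 2 ≤ (S.card : ℝ) * ∑ i ∈ S, |u i| ^ 2 := h1
        _ ≤ (k : ℝ) * ∑ i, |u i| ^ 2 := by
            apply mul_le_mul hcard h2 (Finset.sum_nonneg fun i _ => by positivity)
              (Nat.cast_nonneg _)
        _ = (k : ℝ) * N ^ 2 := by rw [h3]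
    have : s ≤ Real.sqrt ((k : ℝ) * N ^ 2) := by
      rw [← Real.sqrt_sq hs0]
      exact Real.sqrt_le_sqrt hsq
    rwa [Real.sqrt_mul (Nat.cast_nonneg _), Real.sqrt_sq hN0] at this
  -- bound |⟪gL δ* w*, u⟫| ≤ M * T
  have hinner_sum : ∀ a b : EuclideanSpace ℝ (Fin d), ⟪a, b⟫ = ∑ i, a i * b i := by
    intro a b
    simp [PiLp.inner_apply, RCLike.inner_apply, mul_comm]
  have hg0 : |⟪gL δstar wstar, u⟫| ≤ M * T := by
    rw [hinner_sum]
    calc |∑ i, gL δstar wstar i * u i| ≤ ∑ i, |gL δstar wstar i * u i| :=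
          Finset.abs_sum_le_sum_abs _ _
      _ ≤ ∑ i, M * |u i| := by
          apply Finset.sum_le_sum
          intro i _
          rw [abs_mul]
          apply mul_le_mul_of_nonneg_right _ (abs_nonneg _)
          exact le_ciSup (f := fun j => |gL δstar wstar j|)
            (Set.Finite.bddAbove (Set.finite_range _)) i
      _ = M * T := by rw [← Finset.mul_sum]
  -- subgradient inequality at δ*
  have hsubs : (∑ i, |δstar i|) ≥ (∑ i, |δhat i|) + ⟪g, δstar - δhat⟫ := hsub δstar
  have hgu : ⟪g, u⟫ ≥ (∑ i, |δhat i|) - (∑ i, |δstar i|) := by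
    have hneg : δstar - δhat = -u := by rw [hδhat]; abel
    rw [hneg, inner_neg_right] at hsubs
    linarith
  -- value of ⟪gL δ̂ ŵ, u⟫
  have hval : ⟪gL δhat what, u⟫ = -lam * ⟪g, u⟫ := by
    rw [heq, real_inner_smul_left]
  -- telescoping
  have htel : ⟪gL δhat what, u⟫ = ⟪gL δhat what - gL δhat wstar, u⟫
      + ⟪gL δhat wstar - gL δstar wstar, u⟫ + ⟪gL δstar wstar, u⟫ := by
    simp [inner_sub_left]
  -- assemble the key inequality
  have hMle : M ≤ lam / 2 - ρ * τ₁ - τ₂ := by linarith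
  have hTρ : T ≤ ρ := huρ
  have habs : -⟪gL δstar wstar, u⟫ ≤ M * T := by
    have := abs_le.1 hg0
    linarith [this.1]
  have hkey : (κ₁ - κ₂) * N ^ 2 ≤ 3 * Real.sqrt k * lam / 2 * N := by
    have e1 : (κ₁ - κ₂) * N ^ 2 - τ₁ * T ^ 2 - τ₂ * T + ⟪gL δstar wstar, u⟫
        ≤ ⟪gL δhat what, u⟫ := by
      rw [htel]; linarith [hi, hii]
    have e2 : ⟪gL δhat what, u⟫ ≤ lam * ((∑ i, |δstar i|) - (∑ i, |δhat i|)) := by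
      rw [hval]
      nlinarith [mul_le_mul_of_nonneg_left hgu hlam0]
    have e3 : lam * ((∑ i, |δstar i|) - (∑ i, |δhat i|)) ≤ lam * (s - c) :=
      mul_le_mul_of_nonneg_left hdecomp hlam0
    have e4 : τ₁ * T ^ 2 ≤ ρ * τ₁ * T := by
      nlinarith [mul_le_mul_of_nonneg_left (mul_le_mul_of_nonneg_right hTρ hT0) hτ₁]
    have e5 : M * T ≤ lam / 2 * T - ρ * τ₁ * T - τ₂ * T := by
      nlinarith [mul_le_mul_of_nonneg_right hMle hT0]
    -- combine: (κ₁-κ₂)N² ≤ lam*(s-c) + τ₁T² + τ₂T + M*T ≤ lam(s-c) + (lam/2)T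
    have e6 : (κ₁ - κ₂) * N ^ 2 ≤ lam * (s - c) + lam / 2 * T := by
      linarith [e1, e2, e3, e4, e5, habs]
    have e7 : lam * (s - c) + lam / 2 * T ≤ 3 / 2 * lam * s := by
      rw [← hsc]; nlinarith [mul_nonneg hlam0 hc0]
    have e8 : 3 / 2 * lam * s ≤ 3 / 2 * lam * (Real.sqrt k * N) := by
      apply mul_le_mul_of_nonneg_left hsN (by positivity)
    linarith [e6, e7, e8]
  -- conclude
  have hδu : δhat - δstar = u := by rw [hδhat]; abel
  rw [hδu, ← hN]
  rcases eq_or_lt_of_le hN0 with h0 | hpos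
  · rw [← h0]
    have hpos' : 0 < κ₁ - κ₂ := by linarith
    positivity
  · have hpos' : 0 < κ₁ - κ₂ := by linarith
    have h1 : (κ₁ - κ₂) * N ≤ 3 * Real.sqrt k * lam / 2 := by
      have hkey' : ((κ₁ - κ₂) * N) * N ≤ (3 * Real.sqrt k * lam / 2) * N := by
        linarith [hkey]
      exact le_of_mul_le_mul_right hkey' hpos
    rw [one_div_mul_eq_div, le_div_iff₀ hpos', mul_comm]
    exact h1
end

section
/- Let y_1, …, y_n ∈ ℝ^d with ‖y_j‖_∞ ≤ C_q for all j, let e_1, …, e_n ∈ ℝ with 0 < c₁ ≤ e_j ≤ c₂ for all j, and set C_r := c₂/c₁. Let G ⊆ {1, …, n} be nonempty with complement B, and put s := Σ_{j=1}^n e_j and s̄ := Σ_{j ∈ G} e_j. Then ‖ Σ_{j ∈ G} (e_j/s̄) y_j − Σ_{j=1}^n (e_j/s) y_j ‖_∞ ≤ 2 C_r² |B| C_q / n. -/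
open Finset

/-- sup-norm bound between the softmax average over the retained set `G`
and the softmax average over the full sample.  With `‖yⱼ‖_∞ ≤ C_q`,
`0 < c₁ ≤ eⱼ ≤ c₂`, `C_r = c₂/c₁`, `s = ∑ⱼ eⱼ`, `s̄ = ∑_{j∈G} eⱼ`:
`‖∑_{j∈G} (eⱼ/s̄) yⱼ - ∑ⱼ (eⱼ/s) yⱼ‖_∞ ≤ 2 C_r² |B| C_q / n` (coordinatewise). -/
theorem softmax_average_restriction_bound (d n : ℕ) (y : Fin n → Fin d → ℝ)
    (Cq : ℝ) (hy : ∀ j, ∀ a, |y j a| ≤ Cq)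
    (e : Fin n → ℝ) (c₁ c₂ : ℝ) (hc₁ : 0 < c₁)
    (he : ∀ j, c₁ ≤ e j ∧ e j ≤ c₂)
    (Cr : ℝ) (hCr : Cr = c₂ / c₁)
    (G : Finset (Fin n)) (hG : G.Nonempty)
    (s sbar : ℝ) (hs : s = ∑ j, e j) (hsbar : sbar = ∑ j ∈ G, e j) :
    ∀ a, |∑ j ∈ G, (e j / sbar) * y j a - ∑ j, (e j / s) * y j a|
      ≤ 2 * Cr ^ 2 * (Gᶜ.card : ℝ) * Cq / n := by
  intro a
  obtain ⟨j₀, hj₀⟩ := hG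
  have hCq : 0 ≤ Cq := le_trans (abs_nonneg _) (hy j₀ a)
  have hn : 0 < (n : ℝ) := by
    have : 0 < n := Fin.pos j₀
    exact_mod_cast this
  set sB : ℝ := ∑ j ∈ Gᶜ, e j with hsB
  have hepos : ∀ j, 0 < e j := fun j => lt_of_lt_of_le hc₁ (he j).1
  have hsbar_pos : 0 < sbar := by
    rw [hsbar]
    exact Finset.sum_pos (fun j _ => hepos j) ⟨j₀, hj₀⟩
  have hsB_nonneg : 0 ≤ sB := Finset.sum_nonneg fun j _ => (hepos j).le
  have hsplit : s = sbar + sB := by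
    rw [hs, hsbar, hsB, Finset.sum_add_sum_compl]
  have hs_pos : 0 < s := by rw [hsplit]; linarith
  have hsB_le : sB ≤ (Gᶜ.card : ℝ) * c₂ := by
    rw [hsB]
    calc ∑ j ∈ Gᶜ, e j ≤ ∑ _j ∈ Gᶜ, c₂ := Finset.sum_le_sum fun j _ => (he j).2
    _ = (Gᶜ.card : ℝ) * c₂ := by rw [Finset.sum_const, nsmul_eq_mul]
  have hs_ge : (n : ℝ) * c₁ ≤ s := by
    rw [hs]
    calc (n : ℝ) * c₁ = ∑ _j : Fin n, c₁ := by
          rw [Finset.sum_const, nsmul_eq_mul, Finset.card_univ, Fintype.card_fin]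
    _ ≤ ∑ j, e j := Finset.sum_le_sum fun j _ => (he j).1
  have hsum_G : ∑ j ∈ G, (e j / sbar - e j / s) = sB / s := by
    rw [Finset.sum_sub_distrib, ← Finset.sum_div, ← Finset.sum_div, ← hsbar,
      div_self hsbar_pos.ne']
    field_simp
    linarith [hsplit]
  have h1 : |∑ j ∈ G, (e j / sbar) * y j a - ∑ j ∈ G, (e j / s) * y j a|
      ≤ sB / s * Cq := by
    rw [← Finset.sum_sub_distrib]
    calc |∑ j ∈ G, ((e j / sbar) * y j a - (e j / s) * y j a)|
        ≤ ∑ j ∈ G, |(e j / sbar) * y j a - (e j / s) * y j a| :=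
          Finset.abs_sum_le_sum_abs _ _
      _ ≤ ∑ j ∈ G, (e j / sbar - e j / s) * Cq := by
          apply Finset.sum_le_sum
          intro j _
          have hnn : 0 ≤ e j / sbar - e j / s := by
            have : e j / s ≤ e j / sbar :=
              div_le_div_of_nonneg_left (hepos j).le hsbar_pos (by linarith)
            linarith
          calc |(e j / sbar) * y j a - (e j / s) * y j a|
              = (e j / sbar - e j / s) * |y j a| := by
                rw [← sub_mul, abs_mul, abs_of_nonneg hnn]
            _ ≤ (e j / sbar - e j / s) * Cq :=
                mul_le_mul_of_nonneg_left (hy j a) hnn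
      _ = sB / s * Cq := by rw [← Finset.sum_mul, hsum_G]
  have h2 : |∑ j ∈ Gᶜ, (e j / s) * y j a| ≤ sB / s * Cq := by
    calc |∑ j ∈ Gᶜ, (e j / s) * y j a|
        ≤ ∑ j ∈ Gᶜ, |(e j / s) * y j a| := Finset.abs_sum_le_sum_abs _ _
      _ ≤ ∑ j ∈ Gᶜ, (e j / s) * Cq := by
          apply Finset.sum_le_sum
          intro j _
          rw [abs_mul, abs_of_nonneg (div_nonneg (hepos j).le hs_pos.le)]
          exact mul_le_mul_of_nonneg_left (hy j a) (div_nonneg (hepos j).le hs_pos.le)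
      _ = sB / s * Cq := by rw [← Finset.sum_mul, ← Finset.sum_div]
  have hratio : sB / s ≤ Cr ^ 2 * (Gᶜ.card : ℝ) / n := by
    have step1 : sB / s ≤ ((Gᶜ.card : ℝ) * c₂) / ((n : ℝ) * c₁) :=
      div_le_div₀ (mul_nonneg (Nat.cast_nonneg _) (hc₁.le.trans ((he j₀).1.trans (he j₀).2))) hsB_le (by positivity) hs_ge
    have hCr1 : 1 ≤ c₂ / c₁ := by
      rw [le_div_iff₀ hc₁, one_mul]
      exact le_trans (he j₀).1 (he j₀).2
    have step2 : ((Gᶜ.card : ℝ) * c₂) / ((n : ℝ) * c₁) = (c₂ / c₁) * ((Gᶜ.card : ℝ) / n) := by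
      field_simp
    have step3 : (c₂ / c₁) * ((Gᶜ.card : ℝ) / n) ≤ (c₂ / c₁) ^ 2 * ((Gᶜ.card : ℝ) / n) := by
      apply mul_le_mul_of_nonneg_right _ (by positivity)
      nlinarith [hCr1]
    calc sB / s ≤ (c₂ / c₁) * ((Gᶜ.card : ℝ) / n) := by rw [← step2]; exact step1
      _ ≤ (c₂ / c₁) ^ 2 * ((Gᶜ.card : ℝ) / n) := step3
      _ = Cr ^ 2 * (Gᶜ.card : ℝ) / n := by rw [hCr]; ring
  have hsplit_sum : ∑ j, (e j / s) * y j a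
      = ∑ j ∈ G, (e j / s) * y j a + ∑ j ∈ Gᶜ, (e j / s) * y j a :=
    (Finset.sum_add_sum_compl G _).symm
  calc |∑ j ∈ G, (e j / sbar) * y j a - ∑ j, (e j / s) * y j a|
      = |(∑ j ∈ G, (e j / sbar) * y j a - ∑ j ∈ G, (e j / s) * y j a)
          - ∑ j ∈ Gᶜ, (e j / s) * y j a| := by rw [hsplit_sum]; congr 1; ring
    _ ≤ |∑ j ∈ G, (e j / sbar) * y j a - ∑ j ∈ G, (e j / s) * y j a|
          + |∑ j ∈ Gᶜ, (e j / s) * y j a| := abs_sub _ _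
    _ ≤ sB / s * Cq + sB / s * Cq := add_le_add h1 h2
    _ = 2 * (sB / s) * Cq := by ring
    _ ≤ 2 * (Cr ^ 2 * (Gᶜ.card : ℝ) / n) * Cq := by
        apply mul_le_mul_of_nonneg_right _ hCq
        linarith
    _ = 2 * Cr ^ 2 * (Gᶜ.card : ℝ) * Cq / n := by ring
end
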